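/- arXiv:2307.09366 — 4 statements merged into one kernel-verified Lean document; each statement's English description precedes it below -/
import Mathlib

section
/- For parameters λ0, λ2 > 0 and M > 0, define ψ(θ) = min over z ∈ [0,1] and s ≥ 0 with s·z ≥ θ² and |θ| ≤ M·z of λ0·z + λ2·s. Then ψ(θ) = 2√(λ0λ2)|θ| if |θ| ≤ √(λ0/λ2) ≤ M; ψ(θ) = λ0 + λ2θ² if √(λ0/λ2) ≤ |θ| ≤ M; ψ(θ) = (λ0/M + λ2M)|θ| if |θ| ≤ M ≤ √(λ0/λ2); and ψ(θ) = ∞ if |θ| > M. -/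
noncomputable def psiInf (l0 l2 M θ : ℝ) : EReal :=
  sInf {v : EReal | ∃ z s : ℝ, 0 ≤ z ∧ z ≤ 1 ∧ 0 ≤ s ∧ θ^2 ≤ s * z ∧ |θ| ≤ M * z ∧
    v = ((l0 * z + l2 * s : ℝ) : EReal)}

lemma psiInf_eq (l0 l2 M θ c : ℝ)
    (hmem : ∃ z s : ℝ, 0 ≤ z ∧ z ≤ 1 ∧ 0 ≤ s ∧ θ^2 ≤ s * z ∧ |θ| ≤ M * z ∧
      c = l0 * z + l2 * s)
    (hlb : ∀ z s : ℝ, 0 ≤ z → z ≤ 1 → 0 ≤ s → θ^2 ≤ s * z → |θ| ≤ M * z →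
      c ≤ l0 * z + l2 * s) :
    psiInf l0 l2 M θ = (c : EReal) := by
  apply le_antisymm
  · apply sInf_le
    obtain ⟨z, s, h1, h2, h3, h4, h5, h6⟩ := hmem
    exact ⟨z, s, h1, h2, h3, h4, h5, by rw [h6]⟩
  · apply le_sInf
    rintro v ⟨z, s, h1, h2, h3, h4, h5, rfl⟩
    exact_mod_cast hlb z s h1 h2 h3 h4 h5

set_option maxHeartbeats 1000000 in
theorem stmt0 (l0 l2 M θ : ℝ) (h0 : 0 < l0) (h2 : 0 < l2) (hM : 0 < M) :
    (|θ| ≤ Real.sqrt (l0 / l2) → Real.sqrt (l0 / l2) ≤ M →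
      psiInf l0 l2 M θ = ((2 * Real.sqrt (l0 * l2) * |θ| : ℝ) : EReal)) ∧
    (Real.sqrt (l0 / l2) ≤ |θ| → |θ| ≤ M →
      psiInf l0 l2 M θ = ((l0 + l2 * θ^2 : ℝ) : EReal)) ∧
    (|θ| ≤ M → M ≤ Real.sqrt (l0 / l2) →
      psiInf l0 l2 M θ = (((l0 / M + l2 * M) * |θ| : ℝ) : EReal)) ∧
    (M < |θ| → psiInf l0 l2 M θ = ⊤) := by
  set t := Real.sqrt (l0 / l2) with ht
  have htpos : 0 < t := Real.sqrt_pos.2 (by positivity)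
  have ht2 : t ^ 2 = l0 / l2 := Real.sq_sqrt (by positivity)
  set a := Real.sqrt (l0 * l2) with ha
  have hapos : 0 < a := Real.sqrt_pos.2 (by positivity)
  have ha2 : a ^ 2 = l0 * l2 := Real.sq_sqrt (by positivity)
  have hat : a * t = l0 := by
    rw [ha, ht, ← Real.sqrt_mul (by positivity)]
    rw [show l0 * l2 * (l0 / l2) = l0 ^ 2 by field_simp]
    exact Real.sqrt_sq h0.le
  refine ⟨?_, ?_, ?_, ?_⟩
  · -- case 1 : |θ| ≤ t ≤ M
    intro hθt htM
    apply psiInf_eq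
    · refine ⟨|θ| / t, |θ| * t, by positivity, ?_, by positivity, ?_, ?_, ?_⟩
      · exact div_le_one_of_le₀ hθt htpos.le
      · rw [show |θ| * t * (|θ| / t) = |θ| ^ 2 * (t / t) by ring, div_self htpos.ne',
          mul_one, sq_abs]
      · rw [show M * (|θ| / t) = |θ| * (M / t) by ring]
        nlinarith [abs_nonneg θ, (one_le_div htpos).2 htM]
      · have hl2t : l2 * t ^ 2 = l0 := by rw [ht2]; field_simp
        have hl2ta : l2 * t = a :=
          mul_right_cancel₀ htpos.ne' (by linear_combination hl2t - hat)
        rw [← hat, ← hl2ta]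
        field_simp
        ring
    · intro z s hz hz1 hs hsz hMz
      -- AM-GM: l0 z + l2 s ≥ 2 a |θ|
      have hP : 0 ≤ l0 * z + l2 * s := by positivity
      have hQ : 0 ≤ 2 * a * |θ| := by positivity
      have hsq : (2 * a * |θ|) ^ 2 ≤ (l0 * z + l2 * s) ^ 2 := by
        nlinarith [sq_nonneg (l0 * z - l2 * s), sq_abs θ, ha2,
          mul_nonneg (mul_pos h0 h2).le (sub_nonneg.2 hsz)]
      nlinarith [hsq, hP, hQ]
  · -- case 2 : t ≤ |θ| ≤ M
    intro htθ hθM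
    have hθpos : 0 < |θ| := lt_of_lt_of_le htpos htθ
    have hθ2 : l0 / l2 ≤ θ ^ 2 := by
      rw [← ht2, ← sq_abs θ]; exact pow_le_pow_left₀ htpos.le htθ 2
    have hl0 : l0 ≤ l2 * θ ^ 2 := by
      rw [div_le_iff₀ h2] at hθ2; linarith [hθ2]
    apply psiInf_eq
    · exact ⟨1, θ ^ 2, by norm_num, le_refl 1, by positivity, by norm_num,
        by rwa [mul_one], by ring⟩
    · intro z s hz hz1 hs hsz hMz
      have hzpos : 0 < z := by
        rcases hz.lt_or_eq with h | h
        · exact h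
        · exfalso; rw [← h] at hMz; simp at hMz
          nlinarith [hθpos, hMz]
      nlinarith [mul_nonneg (sub_nonneg.2 hz1) (sub_nonneg.2 hl0),
        mul_nonneg h2.le (sub_nonneg.2 hsz), sq_nonneg (1 - z),
        mul_pos h0 (mul_pos hzpos hzpos)]
  · -- case 3 : |θ| ≤ M ≤ t
    intro hθM hMt
    have hM2' : M ^ 2 ≤ l0 / l2 := ht2 ▸ pow_le_pow_left₀ hM.le hMt 2
    have hM2 : l2 * M ^ 2 ≤ l0 := by
      have := (le_div_iff₀ h2).1 hM2'; linarith
    apply psiInf_eq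
    · refine ⟨|θ| / M, |θ| * M, by positivity, ?_, by positivity, ?_, ?_, ?_⟩
      · exact div_le_one_of_le₀ hθM hM.le
      · rw [show |θ| * M * (|θ| / M) = |θ| ^ 2 * (M / M) by ring, div_self hM.ne',
          mul_one, sq_abs]
      · rw [mul_div_cancel₀ _ hM.ne']
      · field_simp
    · intro z s hz hz1 hs hsz hMz
      -- need (l0/M + l2 M)|θ| ≤ l0 z + l2 s
      rw [div_add' _ _ _ hM.ne', div_mul_eq_mul_div, div_le_iff₀ hM]
      -- (l0 + l2 M^2)|θ| ≤ (l0 z + l2 s) M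
      have hb : 0 ≤ l0 * z - l2 * M * |θ| := by
        nlinarith [mul_nonneg (sub_nonneg.2 hM2) hz,
          mul_nonneg (mul_nonneg h2.le hM.le) (sub_nonneg.2 hMz)]
      rcases hz.lt_or_eq with hzpos | hzeq
      · have key : ((l0 + l2 * M * M) * |θ|) * z ≤ ((l0 * z + l2 * s) * M) * z := by
          nlinarith [mul_nonneg (sub_nonneg.2 hMz) hb, sq_abs θ,
            mul_nonneg (mul_nonneg h2.le hM.le) (sub_nonneg.2 hsz)]
        exact le_of_mul_le_mul_right key hzpos
      · have hθ0 : |θ| = 0 := le_antisymm (by rw [← hzeq] at hMz; simpa using hMz)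
          (abs_nonneg θ)
        rw [hθ0]
        have : 0 ≤ (l0 * z + l2 * s) * M := by positivity
        linarith
  · -- case 4 : M < |θ|, empty feasible set
    intro hMθ
    have hempty : {v : EReal | ∃ z s : ℝ, 0 ≤ z ∧ z ≤ 1 ∧ 0 ≤ s ∧ θ^2 ≤ s * z ∧
        |θ| ≤ M * z ∧ v = ((l0 * z + l2 * s : ℝ) : EReal)} = ∅ := by
      ext v
      simp only [Set.mem_setOf_eq, Set.mem_empty_iff_false, iff_false]
      rintro ⟨z, s, hz, hz1, hs, hsz, hMz, rfl⟩
      nlinarith [mul_le_of_le_one_right hM.le hz1]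
    rw [psiInf, hempty, sInf_empty]
end

section
/- Let λ0 > 0, λ2 ≥ 0, M ∈ (0, ∞], and define q(θ) = (1/2)(θ - t)² + λ0·1{θ ≠ 0} + λ2θ² on {θ : |θ| ≤ M}. If |t| < min{√(2λ0(1+2λ2)), (1+2λ2)M}, then θ = 0 is the unique minimizer of q, and if √(2λ0(1+2λ2)) < |t| ≤ (1+2λ2)M, then θ = t/(1+2λ2) is the unique minimizer of q. -/
theorem stmt5 (l0 l2 t : ℝ) (M : EReal) (h0 : 0 < l0) (h2 : 0 ≤ l2) (hM : 0 < M) :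
    let q : ℝ → ℝ := fun θ => 1/2 * (θ - t)^2 + (if θ = 0 then 0 else l0) + l2 * θ^2
    (((|t| : ℝ) : EReal) <
        min ((Real.sqrt (2 * l0 * (1 + 2 * l2)) : ℝ) : EReal) (((1 + 2 * l2 : ℝ) : EReal) * M) →
      ∀ θ : ℝ, ((|θ| : ℝ) : EReal) ≤ M → θ ≠ 0 → q 0 < q θ) ∧
    (Real.sqrt (2 * l0 * (1 + 2 * l2)) < |t| →
      ((|t| : ℝ) : EReal) ≤ ((1 + 2 * l2 : ℝ) : EReal) * M →
      ∀ θ : ℝ, ((|θ| : ℝ) : EReal) ≤ M → θ ≠ t / (1 + 2 * l2) →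
        q (t / (1 + 2 * l2)) < q θ) := by
  intro q
  have ha : (0:ℝ) < 1 + 2*l2 := by linarith
  have hpos : (0:ℝ) ≤ 2 * l0 * (1 + 2 * l2) := by positivity
  constructor
  · intro ht θ hθ hθ0
    have ht' : |t| < Real.sqrt (2 * l0 * (1 + 2 * l2)) := by
      have := lt_of_lt_of_le ht (min_le_left _ _)
      exact_mod_cast this
    have ht2 : t^2 < 2 * l0 * (1 + 2 * l2) := by
      have h1 : |t|^2 < (Real.sqrt (2 * l0 * (1 + 2 * l2)))^2 :=
        pow_lt_pow_left₀ ht' (abs_nonneg t) (by norm_num)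
      rw [Real.sq_sqrt hpos, sq_abs] at h1
      exact h1
    simp only [q, if_neg hθ0, reduceIte]
    nlinarith [sq_nonneg ((1 + 2*l2)*θ - t), mul_pos ha ha]
  · intro ht _ θ hθ hne
    have ht2 : 2 * l0 * (1 + 2 * l2) < t^2 := by
      have h1 : (Real.sqrt (2 * l0 * (1 + 2 * l2)))^2 < |t|^2 :=
        pow_lt_pow_left₀ ht (Real.sqrt_nonneg _) (by norm_num)
      rw [Real.sq_sqrt hpos, sq_abs] at h1
      exact h1
    have htne : t ≠ 0 := by
      intro h; rw [h] at ht2; nlinarith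
    set s := t / (1 + 2*l2) with hsdef
    have hstar : s ≠ 0 := div_ne_zero htne ha.ne'
    have hs : (1 + 2*l2) * s = t := mul_div_cancel₀ t ha.ne'
    by_cases hz : θ = 0
    · subst hz
      simp only [q, if_neg hstar, reduceIte]
      have key : 1/2 * (0 - t)^2 + 0 + l2 * 0^2
          - (1/2 * (s - t)^2 + l0 + l2 * s^2) = (1 + 2*l2)/2 * s^2 - l0 := by
        rw [← hs]; ring
      have ht2' : 2 * l0 * (1 + 2 * l2) < ((1 + 2*l2) * s)^2 := by rw [hs]; exact ht2
      nlinarith [key, ht2', ha, sq_nonneg s]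
    · simp only [q, if_neg hz, if_neg hstar]
      have key : 1/2 * (θ - t)^2 + l0 + l2 * θ^2
          - (1/2 * (s - t)^2 + l0 + l2 * s^2) = (1 + 2*l2)/2 * (θ - s)^2 := by
        rw [← hs]; ring
      have hd : (0:ℝ) < (θ - s)^2 := by
        have := sub_ne_zero.mpr hne
        positivity
      nlinarith [key, hd, ha, mul_pos (half_pos ha) hd]
end

section
/- Let λ0 > 0, λ2 > 0, M > 0 with √(λ0/λ2) ≤ M, and let ψ(θ) = 2√(λ0λ2)|θ| for |θ| ≤ √(λ0/λ2), ψ(θ) = λ0 + λ2θ² for √(λ0/λ2) ≤ |θ| ≤ M, ψ(θ) = ∞ for |θ| > M. Its convex conjugate ψ*(α) = sup_θ (αθ - ψ(θ)) satisfies: ψ*(α) = 0 if |α| ≤ 2√(λ0λ2); ψ*(α) = α²/(4λ2) - λ0 if 2√(λ0λ2) ≤ |α| ≤ 2λ2M; and ψ*(α) = M|α| - (λ0 + λ2M²) if |α| ≥ 2λ2M. -/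
set_option maxHeartbeats 1000000


noncomputable def psi6 (l0 l2 M θ : ℝ) : EReal :=
  if M < |θ| then ⊤
  else if |θ| ≤ Real.sqrt (l0 / l2) then ((2 * Real.sqrt (l0 * l2) * |θ| : ℝ) : EReal)
  else ((l0 + l2 * θ^2 : ℝ) : EReal)

noncomputable def psi6Conj (l0 l2 M α : ℝ) : EReal :=
  ⨆ θ : ℝ, ((α * θ : ℝ) : EReal) - psi6 l0 l2 M θ

lemma conj_eq6 (l0 l2 M α c : ℝ)
    (hub1 : ∀ θ : ℝ, |θ| ≤ M → |θ| ≤ Real.sqrt (l0 / l2) →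
      α * θ - 2 * Real.sqrt (l0 * l2) * |θ| ≤ c)
    (hub2 : ∀ θ : ℝ, |θ| ≤ M → α * θ - (l0 + l2 * θ ^ 2) ≤ c)
    (θ₀ : ℝ) (h0 : ((α * θ₀ : ℝ) : EReal) - psi6 l0 l2 M θ₀ = ((c : ℝ) : EReal)) :
    psi6Conj l0 l2 M α = ((c : ℝ) : EReal) := by
  apply le_antisymm
  · apply iSup_le
    intro θ
    unfold psi6
    split_ifs with h1 h2
    · rw [EReal.sub_top]; exact bot_le
    · rw [← EReal.coe_sub]
      exact_mod_cast hub1 θ (le_of_not_gt h1) h2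
    · rw [← EReal.coe_sub]
      exact_mod_cast hub2 θ (le_of_not_gt h1)
  · rw [← h0]
    exact le_iSup (fun θ => ((α * θ : ℝ) : EReal) - psi6 l0 l2 M θ) θ₀

lemma psi6_val (l0 l2 M θ : ℝ) (h0 : 0 < l0) (h2 : 0 < l2)
    (hθM : |θ| ≤ M) (hθr : Real.sqrt (l0 / l2) ≤ |θ|) :
    psi6 l0 l2 M θ = ((l0 + l2 * θ ^ 2 : ℝ) : EReal) := by
  unfold psi6
  rw [if_neg (not_lt.mpr hθM)]
  split_ifs with hc
  · have heq : |θ| = Real.sqrt (l0 / l2) := le_antisymm hc hθr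
    congr 1
    have hsq : θ ^ 2 = l0 / l2 := by
      rw [← sq_abs, heq, Real.sq_sqrt (by positivity)]
    have hprod : Real.sqrt (l0 * l2) * |θ| = l0 := by
      rw [heq, ← Real.sqrt_mul (by positivity),
        show l0 * l2 * (l0 / l2) = l0 ^ 2 by field_simp,
        Real.sqrt_sq h0.le]
    have hl : l2 * (l0 / l2) = l0 := by field_simp
    rw [hsq, hl]
    linarith [hprod]
  · rfl

theorem stmt6 (l0 l2 M : ℝ) (h0 : 0 < l0) (h2 : 0 < l2) (hM : 0 < M)
    (hreg : Real.sqrt (l0 / l2) ≤ M) :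
    ∀ α : ℝ,
      (|α| ≤ 2 * Real.sqrt (l0 * l2) → psi6Conj l0 l2 M α = ((0 : ℝ) : EReal)) ∧
      (2 * Real.sqrt (l0 * l2) ≤ |α| → |α| ≤ 2 * l2 * M →
        psi6Conj l0 l2 M α = ((α^2 / (4 * l2) - l0 : ℝ) : EReal)) ∧
      (2 * l2 * M ≤ |α| →
        psi6Conj l0 l2 M α = ((M * |α| - (l0 + l2 * M^2) : ℝ) : EReal)) := by
  have hr0 : (0:ℝ) ≤ Real.sqrt (l0 / l2) := Real.sqrt_nonneg _
  set r := Real.sqrt (l0 / l2) with hr_def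
  set s := Real.sqrt (l0 * l2) with hs_def
  have hr2 : l2 * r ^ 2 = l0 := by
    rw [hr_def, Real.sq_sqrt (by positivity)]; field_simp
  have hs : s = l2 * r := by
    rw [hs_def, hr_def, show l0 * l2 = l2 ^ 2 * (l0 / l2) by field_simp,
      Real.sqrt_mul (sq_nonneg l2), Real.sqrt_sq h2.le]
  have hsr : s * r = l0 := by rw [hs]; nlinarith
  have hs0 : 0 < s := by rw [hs_def]; positivity
  have hrpos : 0 < r := by nlinarith
  intro α
  refine ⟨?_, ?_, ?_⟩
  · -- case 1 : |α| ≤ 2s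
    intro hα
    apply conj_eq6 l0 l2 M α 0
    · intro θ hθM hθr
      have h1 : α * θ ≤ |α| * |θ| := (le_abs_self _).trans (le_of_eq (abs_mul α θ))
      nlinarith [abs_nonneg θ]
    · intro θ hθM
      have h1 : α * θ ≤ |α| * |θ| := (le_abs_self _).trans (le_of_eq (abs_mul α θ))
      have h3 : 2 * s * |θ| ≤ l0 + l2 * θ ^ 2 := by
        nlinarith [mul_nonneg h2.le (sq_nonneg (r - |θ|)), sq_abs θ]
      nlinarith [abs_nonneg θ]
    · show ((α * 0 : ℝ) : EReal) - psi6 l0 l2 M 0 = ((0 : ℝ) : EReal)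
      have : psi6 l0 l2 M 0 = ((2 * s * |(0:ℝ)| : ℝ) : EReal) := by
        unfold psi6
        rw [if_neg (by simp [hM.le, not_lt, abs_nonneg]), if_pos (by simpa using hr0)]
      rw [this, ← EReal.coe_sub]
      norm_num
  · -- case 2
    intro hα1 hα2
    set θ₀ := α / (2 * l2) with hθ₀
    have habs : |θ₀| = |α| / (2 * l2) := by
      rw [hθ₀, abs_div, abs_of_pos (by positivity : (0:ℝ) < 2 * l2)]
    have hθM : |θ₀| ≤ M := by rw [habs, div_le_iff₀ (by positivity)]; nlinarith
    have hθr : r ≤ |θ₀| := by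
      rw [habs, le_div_iff₀ (by positivity)]; nlinarith [hs]
    apply conj_eq6 l0 l2 M α (α ^ 2 / (4 * l2) - l0)
    · intro θ hθM' hθr'
      have h1 : α * θ ≤ |α| * |θ| := (le_abs_self _).trans (le_of_eq (abs_mul α θ))
      have h4 : (|α| - 2 * s) * (r - |θ|) ≥ 0 :=
        mul_nonneg (by linarith) (by linarith)
      have h7 : |α| * r ≤ α ^ 2 / (4 * l2) + l0 := by
        rw [← sq_abs α, div_add' _ _ _ (by positivity : (4:ℝ) * l2 ≠ 0),
          le_div_iff₀ (by positivity)]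
        nlinarith [sq_nonneg (|α| - 2 * l2 * r)]
      nlinarith [abs_nonneg θ]
    · intro θ hθM'
      have h9 : (α ^ 2 / (4 * l2) - l0) - (α * θ - (l0 + l2 * θ ^ 2))
          = (α - 2 * l2 * θ) ^ 2 / (4 * l2) := by field_simp; ring
      nlinarith [div_nonneg (sq_nonneg (α - 2 * l2 * θ)) (by positivity : (0:ℝ) ≤ 4 * l2)]
    · show ((α * θ₀ : ℝ) : EReal) - psi6 l0 l2 M θ₀ = _
      rw [psi6_val l0 l2 M θ₀ h0 h2 hθM hθr, ← EReal.coe_sub, EReal.coe_eq_coe_iff]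
      rw [hθ₀]
      field_simp
      ring
  · -- case 3
    intro hα
    have hαs : 2 * s ≤ |α| := by nlinarith [hs]
    obtain ⟨θ₀, habs, hmul⟩ : ∃ θ₀ : ℝ, |θ₀| = M ∧ α * θ₀ = |α| * M := by
      rcases le_or_gt 0 α with h | h
      · exact ⟨M, abs_of_pos hM, by rw [abs_of_nonneg h]⟩
      · exact ⟨-M, by rw [abs_neg, abs_of_pos hM], by rw [abs_of_neg h]; ring⟩
    apply conj_eq6 l0 l2 M α (M * |α| - (l0 + l2 * M ^ 2))
    · intro θ hθM hθr
      have h1 : α * θ ≤ |α| * |θ| := (le_abs_self _).trans (le_of_eq (abs_mul α θ))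
      have h4 : (|α| - 2 * s) * (r - |θ|) ≥ 0 :=
        mul_nonneg (by linarith) (by linarith)
      have h5 : (M - r) * (|α| - l2 * (M + r)) ≥ 0 :=
        mul_nonneg (by linarith) (by linarith [mul_le_mul_of_nonneg_left hreg h2.le])
      nlinarith [abs_nonneg θ]
    · intro θ hθM
      have h1 : α * θ ≤ |α| * |θ| := (le_abs_self _).trans (le_of_eq (abs_mul α θ))
      have h5 : (M - |θ|) * (|α| - l2 * (M + |θ|)) ≥ 0 :=
        mul_nonneg (by linarith) (by linarith [mul_le_mul_of_nonneg_left hθM h2.le])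
      nlinarith [sq_abs θ, abs_nonneg θ]
    · show ((α * θ₀ : ℝ) : EReal) - psi6 l0 l2 M θ₀ = _
      rw [psi6_val l0 l2 M θ₀ h0 h2 (le_of_eq habs) (by rw [habs]; exact hreg),
        ← EReal.coe_sub, EReal.coe_eq_coe_iff]
      have h8 : θ₀ ^ 2 = M ^ 2 := by rw [← sq_abs, habs]
      rw [hmul, h8]
      ring
end

section
/- Let λ0, λ2 > 0 with √(λ0/λ2) ≤ M, and let ψ be the perspective penalty. In the minimization defining ψ(θ) = min{λ0 z + λ2 s : sz ≥ θ², |θ| ≤ Mz, z ∈ [0,1], s ≥ 0}, for |θ| ≤ √(λ0/λ2) the minimum is attained at z* = √(λ2/λ0)|θ| and s* = √(λ0/λ2)|θ|, and for √(λ0/λ2) ≤ |θ| ≤ M the minimum is attained at z* = 1 and s* = θ². -/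
set_option maxHeartbeats 1000000


theorem stmt17 (l0 l2 M θ : ℝ) (h0 : 0 < l0) (h2 : 0 < l2)
    (hM : Real.sqrt (l0 / l2) ≤ M) :
    (|θ| ≤ Real.sqrt (l0 / l2) →
      let z : ℝ := Real.sqrt (l2 / l0) * |θ|
      let s : ℝ := Real.sqrt (l0 / l2) * |θ|
      0 ≤ z ∧ z ≤ 1 ∧ 0 ≤ s ∧ θ^2 ≤ s * z ∧ |θ| ≤ M * z ∧
        ∀ z' s' : ℝ, 0 ≤ z' → z' ≤ 1 → 0 ≤ s' → θ^2 ≤ s' * z' → |θ| ≤ M * z' →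
          l0 * z + l2 * s ≤ l0 * z' + l2 * s') ∧
    (Real.sqrt (l0 / l2) ≤ |θ| → |θ| ≤ M →
      (0:ℝ) ≤ 1 ∧ (1:ℝ) ≤ 1 ∧ 0 ≤ θ^2 ∧ θ^2 ≤ θ^2 * 1 ∧ |θ| ≤ M * 1 ∧
        ∀ z' s' : ℝ, 0 ≤ z' → z' ≤ 1 → 0 ≤ s' → θ^2 ≤ s' * z' → |θ| ≤ M * z' →
          l0 * 1 + l2 * θ^2 ≤ l0 * z' + l2 * s') := by
  have ha : 0 < Real.sqrt (l0 / l2) := Real.sqrt_pos.mpr (div_pos h0 h2)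
  have hc : 0 < Real.sqrt (l2 / l0) := Real.sqrt_pos.mpr (div_pos h2 h0)
  have ha2 : Real.sqrt (l0 / l2) ^ 2 = l0 / l2 := Real.sq_sqrt (div_pos h0 h2).le
  have hc2 : Real.sqrt (l2 / l0) ^ 2 = l2 / l0 := Real.sq_sqrt (div_pos h2 h0).le
  set a := Real.sqrt (l0 / l2)
  set c := Real.sqrt (l2 / l0)
  have hac : a * c = 1 := by
    have h : (a * c) ^ 2 = 1 := by
      rw [mul_pow, ha2, hc2]; field_simp
    nlinarith [mul_pos ha hc]
  have ht : 0 ≤ |θ| := abs_nonneg θ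
  have htsq : |θ| ^ 2 = θ ^ 2 := sq_abs θ
  constructor
  · intro hθ
    have hla : (l2 * a) ^ 2 = l0 * l2 := by
      rw [mul_pow, ha2]; field_simp
    have hlc : l0 * c = l2 * a := by
      have h1 : (l0 * c) ^ 2 = l0 * l2 := by rw [mul_pow, hc2]; field_simp
      nlinarith [mul_pos h0 hc, mul_pos h2 ha]
    refine ⟨by positivity, ?_, by positivity, ?_, ?_, ?_⟩
    · show c * |θ| ≤ 1
      nlinarith
    · show θ ^ 2 ≤ a * |θ| * (c * |θ|)
      nlinarith
    · show |θ| ≤ M * (c * |θ|)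
      nlinarith [mul_le_mul_of_nonneg_right hM (mul_nonneg hc.le ht)]
    intro z' s' hz' hz1 hs' hsz hMz
    show l0 * (c * |θ|) + l2 * (a * |θ|) ≤ l0 * z' + l2 * s'
    have key : (2 * (l2 * a) * |θ|) ^ 2 ≤ (l0 * z' + l2 * s') ^ 2 := by
      nlinarith [sq_nonneg (l0 * z' - l2 * s'), mul_pos h0 h2,
        mul_le_mul_of_nonneg_left hsz (mul_pos h0 h2).le]
    have hrhs : 0 ≤ l0 * z' + l2 * s' := by positivity
    have hlhs : 0 ≤ 2 * (l2 * a) * |θ| := by positivity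
    have h2bt : 2 * (l2 * a) * |θ| ≤ l0 * z' + l2 * s' := by
      nlinarith [key, hrhs, hlhs]
    nlinarith [h2bt]
  · intro hθ hθM
    refine ⟨by norm_num, le_refl 1, sq_nonneg θ, by rw [mul_one], by rw [mul_one]; exact hθM, ?_⟩
    intro z' s' hz' hz1 hs' hsz hMz
    have hl : l0 ≤ l2 * θ ^ 2 := by
      have h1 : a ^ 2 ≤ |θ| ^ 2 := pow_le_pow_left₀ ha.le hθ 2
      rw [htsq, ha2] at h1
      calc l0 = l2 * (l0 / l2) := by field_simp
        _ ≤ l2 * θ ^ 2 := by nlinarith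
    have hz'pos : 0 < z' := by
      rcases lt_or_eq_of_le hz' with h | h
      · exact h
      · exfalso
        have hMpos : 0 < M := lt_of_lt_of_le ha hM
        have hθ0 : |θ| = 0 := le_antisymm (by nlinarith) ht
        nlinarith
    nlinarith [mul_nonneg (sub_nonneg.mpr hz1) (by nlinarith : (0:ℝ) ≤ l2 * θ ^ 2 - l0 * z'),
      mul_le_mul_of_nonneg_left hsz h2.le]
end
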